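/- If there exists an end-point preserving homomorphism from a reflexive path P onto a reflexive path Q (i.e. a graph homomorphism mapping vertex 0 of P to vertex 0 of Q and the last vertex of P to the last vertex of Q), then there exists such a homomorphism which is monotone, i.e. a map f with f(i) ≤ f(j) whenever i ≤ j. -/
import Mathlib


inductive Symb : Type
  | plus | minus | star
deriving DecidableEq


/-- the dual of a symbol: `+` ↦ `-`, `-` ↦ `+`, `*` ↦ `*` -/
def dualSym : Symb → Symb
  | Symb.plus => Symb.minus
  | Symb.minus => Symb.plus
  | Symb.star => Symb.star

/-- the dual (involution) of a word: reverse and dualize each symbol -/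
def dualWord (W : List Symb) : List Symb := (W.map dualSym).reverse

/-- the arc relation of the reflexive path `P(W)` on vertices `{0,…,|W|}` -/
def pathArc (W : List Symb) (i j : ℕ) : Prop :=
  i ≤ W.length ∧ j ≤ W.length ∧
    (i = j ∨ (j = i + 1 ∧ (W[i]? = some Symb.plus ∨ W[i]? = some Symb.star))
           ∨ (i = j + 1 ∧ (W[j]? = some Symb.minus ∨ W[j]? = some Symb.star)))

/-- `f` is an end-point preserving homomorphism from the path `P(V)` onto the path `P(U)` -/
def EPHom (V U : List Symb) (f : ℕ → ℕ) : Prop :=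
  f 0 = 0 ∧ f V.length = U.length ∧
  (∀ i j, pathArc V i j → pathArc U (f i) (f j)) ∧
  (∀ m, m ≤ U.length → ∃ i, i ≤ V.length ∧ f i = m)

/-- the order on words: `U ≤ V` iff there is an end-point preserving
homomorphism from `P(V)` onto `P(U)` -/
def wle (U V : List Symb) : Prop := ∃ f, EPHom V U f

/-- If there is an end-point preserving homomorphism from the reflexive path `P(V)`
onto the reflexive path `P(U)`, then there is a monotone one. -/
theorem stmt_0 (V U : List Symb) (f : ℕ → ℕ) (hf : EPHom V U f) :
    ∃ g : ℕ → ℕ, EPHom V U g ∧ ∀ i j, i ≤ j → j ≤ V.length → g i ≤ g j := by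
  obtain ⟨h0, hend, hhom, hsurj⟩ := hf
  have hle : ∀ i, i ≤ V.length → f i ≤ U.length := by
    intro i hi
    exact (hhom i i ⟨hi, hi, Or.inl rfl⟩).1
  -- between consecutive vertices there is at least one arc
  have harc : ∀ i, i < V.length → pathArc V i (i+1) ∨ pathArc V (i+1) i := by
    intro i hi
    have h1 : i ≤ V.length := le_of_lt hi
    have h2 : i + 1 ≤ V.length := hi
    have hs : V[i]? = some (V[i]'hi) := List.getElem?_eq_getElem hi
    cases hV : V[i]'hi with
    | plus =>
      exact Or.inl ⟨h1, h2, Or.inr (Or.inl ⟨rfl, Or.inl (by rw [hs, hV])⟩)⟩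
    | minus =>
      exact Or.inr ⟨h2, h1, Or.inr (Or.inr ⟨rfl, Or.inl (by rw [hs, hV])⟩)⟩
    | star =>
      exact Or.inl ⟨h1, h2, Or.inr (Or.inl ⟨rfl, Or.inr (by rw [hs, hV])⟩)⟩
  -- |f(i+1) - f(i)| ≤ 1
  have hstep : ∀ i, i < V.length →
      f (i+1) = f i ∨ f (i+1) = f i + 1 ∨ f i = f (i+1) + 1 := by
    intro i hi
    rcases harc i hi with h | h
    · rcases (hhom _ _ h).2.2 with h' | ⟨h', _⟩ | ⟨h', _⟩ <;> omega
    · rcases (hhom _ _ h).2.2 with h' | ⟨h', _⟩ | ⟨h', _⟩ <;> omega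
  set g : ℕ → ℕ := fun i => (Finset.range (i+1)).sup f with hg
  have gmono : ∀ i j, i ≤ j → g i ≤ g j := by
    intro i j hij
    exact Finset.sup_mono (Finset.range_subset_range.2 (by omega))
  have g0 : g 0 = 0 := by simp [hg, Finset.range_one, h0]
  have gle : ∀ i, i ≤ V.length → g i ≤ U.length := by
    intro i hi
    apply Finset.sup_le
    intro j hj
    exact hle j (by simp [Finset.mem_range] at hj; omega)
  have gend : g V.length = U.length := by
    refine le_antisymm (gle _ le_rfl) ?_
    rw [← hend]
    exact Finset.le_sup (Finset.self_mem_range_succ _)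
  have gsucc : ∀ i, g (i+1) = max (f (i+1)) (g i) := by
    intro i
    simp [hg, Finset.range_add_one, Finset.sup_insert]
  have gstep : ∀ i, i < V.length →
      g (i+1) = g i ∨ (g (i+1) = g i + 1 ∧ f (i+1) = f i + 1 ∧ g i = f i) := by
    intro i hi
    have hfi : f i ≤ g i := Finset.le_sup (Finset.self_mem_range_succ _)
    have hs := gsucc i
    rcases le_or_gt (f (i+1)) (g i) with h | h
    · left; omega
    · right
      rcases hstep i hi with h' | h' | h' <;>
      · constructor <;> omega
  refine ⟨g, ⟨g0, gend, ?_, ?_⟩, fun i j hij _ => gmono i j hij⟩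
  · -- homomorphism
    rintro a b ⟨ha, hb, hcase | ⟨hcase, hv⟩ | ⟨hcase, hv⟩⟩
    · subst hcase; exact ⟨gle a ha, gle a ha, Or.inl rfl⟩
    · -- b = a + 1, forward arc in V
      subst hcase
      have haV : a < V.length := hb
      rcases gstep a haV with h | ⟨h1, h2, h3⟩
      · exact ⟨gle a ha, gle _ hb, Or.inl h.symm⟩
      · have hU := hhom a (a+1) ⟨ha, hb, Or.inr (Or.inl ⟨rfl, hv⟩)⟩
        rcases hU.2.2 with h' | ⟨_, h'⟩ | ⟨h', _⟩
        · omega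
        · refine ⟨gle a ha, gle _ hb, Or.inr (Or.inl ⟨h1, ?_⟩)⟩
          rwa [h3]
        · omega
    · -- a = b + 1, backward arc in V
      subst hcase
      have hbV : b < V.length := ha
      rcases gstep b hbV with h | ⟨h1, h2, h3⟩
      · exact ⟨gle _ ha, gle b hb, Or.inl h⟩
      · have hU := hhom (b+1) b ⟨ha, hb, Or.inr (Or.inr ⟨rfl, hv⟩)⟩
        rcases hU.2.2 with h' | ⟨h', _⟩ | ⟨_, h'⟩
        · omega
        · omega
        · refine ⟨gle _ ha, gle b hb, Or.inr (Or.inr ⟨h1, ?_⟩)⟩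
          rwa [h3]
  · -- surjectivity, by discrete IVT
    have key : ∀ n, n ≤ V.length → ∀ m, m ≤ g n → ∃ i, i ≤ n ∧ g i = m := by
      intro n
      induction n with
      | zero => intro _ m hm; exact ⟨0, le_rfl, by omega⟩
      | succ n ih =>
        intro hn m hm
        have hn' : n < V.length := hn
        rcases gstep n hn' with h | ⟨h1, _, _⟩
        · obtain ⟨i, hi, hgi⟩ := ih (by omega) m (by omega)
          exact ⟨i, by omega, hgi⟩
        · rcases le_or_gt m (g n) with h' | h'
          · obtain ⟨i, hi, hgi⟩ := ih (by omega) m h'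
            exact ⟨i, by omega, hgi⟩
          · exact ⟨n+1, le_rfl, by omega⟩
    intro m hm
    exact key V.length le_rfl m (by omega)
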